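/- arXiv:2307.04049 — 3 statements merged into one kernel-verified Lean document; each statement's English description precedes it below -/
import Mathlib

section
/- Odd-Even Transposition Sort sorts any array of n elements in at most n rounds: if in odd rounds every pair of entries at positions (2i+1, 2i+2) is swapped when out of order, and in even rounds every pair at positions (2i, 2i+1) is swapped when out of order, alternating for n total rounds, the resulting array is sorted in nondecreasing order. -/
/-!
Monotone maps `α → Bool` commute with compare-exchanges, so it suffices to sort Boolean arrays
(the 0–1 principle). Pad a Boolean array with `true` on the right and follow its zeros. Right
after a round, every descent `true, false` straddles a comparator of the next round, so each
round moves exactly those zeros that have a one immediately to their left one step to the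
left. A zero at `p` is *parked* when only zeros lie below it (`zerosBelow s p = p`). After
`t ≥ 1` rounds, any two unparked zeros at `p ≤ q` satisfy
`p + t + zerosBelow s q ≤ N + 2 * zerosBelow s p`: a zero that moves loses in position what `t`
gains, and a blocked zero inherits the bound of the zero just below it, which has one zero fewer
below it. For `p = q` and `t = N` this is impossible, so after `N` rounds every zero is parked
and the array is sorted.
-/

variable {α : Type*} [LinearOrder α] {n : ℕ}

/-- One half-round of Odd-Even Transposition Sort with offset `r`: every adjacent pair
`(i, i+1)` with `i % 2 = r % 2` is compare-exchanged (replaced by `(min, max)`)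
simultaneously. -/
def oetsRound (r : ℕ) (a : Fin n → α) : Fin n → α := fun i =>
  if (i : ℕ) % 2 = r % 2 then
    if h : (i : ℕ) + 1 < n then min (a i) (a ⟨(i : ℕ) + 1, h⟩) else a i
  else
    if h : 0 < (i : ℕ) then
      max (a ⟨(i : ℕ) - 1, lt_of_le_of_lt (Nat.sub_le _ _) i.isLt⟩) (a i)
    else a i

/-- The OETS trajectory: round `t+1` is odd (pairs starting at odd indices) when `t+1` is
odd, and even (pairs starting at even indices) when `t+1` is even. -/
def oetsSteps (a : Fin n → α) : ℕ → (Fin n → α)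
  | 0 => a
  | t + 1 => oetsRound ((t + 1) % 2) (oetsSteps a t)

theorem Monotone.comp_oetsRound {β : Type*} [LinearOrder β] {f : α → β} (hf : Monotone f)
    (r : ℕ) (a : Fin n → α) : f ∘ oetsRound r a = oetsRound r (f ∘ a) := by
  funext i
  simp only [Function.comp_apply, oetsRound]
  split_ifs <;> simp [hf.map_min, hf.map_max]

theorem Monotone.comp_oetsSteps {β : Type*} [LinearOrder β] {f : α → β} (hf : Monotone f)
    (a : Fin n → α) : ∀ t, f ∘ oetsSteps a t = oetsSteps (f ∘ a) t
  | 0 => rfl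
  | t + 1 => by rw [oetsSteps, oetsSteps, hf.comp_oetsRound, hf.comp_oetsSteps a t]

theorem monotone_of_forall_monotone_decide_le {ι : Type*} [Preorder ι] {g : ι → α}
    (h : ∀ c, Monotone fun i => decide (c ≤ g i)) : Monotone g := fun i j hij => by
  simpa [Bool.le_iff_imp] using h (g i) hij

theorem monotone_decide_le (c : α) : Monotone fun x : α => decide (c ≤ x) :=
  fun _ _ hxy => Bool.le_iff_imp.2 fun h => by simpa using (of_decide_eq_true h).trans hxy

namespace Oets

def natRound (r : ℕ) (s : ℕ → α) : ℕ → α := fun x =>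
  if x % 2 = r % 2 then min (s x) (s (x + 1))
  else if 0 < x then max (s (x - 1)) (s x) else s x

theorem natRound_le_natRound_succ (r : ℕ) (s : ℕ → α) {x : ℕ} (hx : x % 2 = r % 2) :
    natRound r s x ≤ natRound r s (x + 1) := by
  simp only [natRound, hx, if_true, show (x + 1) % 2 ≠ r % 2 by omega, if_false,
    Nat.succ_pos, Nat.add_sub_cancel]
  exact min_le_max

theorem natRound_eq_true {r N : ℕ} {s : ℕ → Bool} (hs : ∀ x, N ≤ x → s x = true) {x : ℕ}
    (hx : N ≤ x) : natRound r s x = true := by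
  simp only [natRound]
  split_ifs <;> simp [hs x hx, hs (x + 1) (by omega)]

def padTrue (c : Fin n → Bool) (x : ℕ) : Bool := if h : x < n then c ⟨x, h⟩ else true

theorem padTrue_of_le (c : Fin n → Bool) {x : ℕ} (hx : n ≤ x) : padTrue c x = true :=
  dif_neg (by omega)

theorem padTrue_val (c : Fin n → Bool) (i : Fin n) : padTrue c i = c i := dif_pos i.isLt

theorem padTrue_oetsRound (r : ℕ) (c : Fin n → Bool) :
    padTrue (oetsRound r c) = natRound r (padTrue c) := by
  funext x
  by_cases hx : x < n
  · simp only [padTrue, hx, dite_true, oetsRound, natRound]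
    split_ifs <;> first | rfl | omega | simp
  · rw [padTrue_of_le _ (by omega), natRound_eq_true (fun _ => padTrue_of_le c) (by omega)]

def zerosBelow (s : ℕ → Bool) (m : ℕ) : ℕ := Nat.count (fun x => s x = false) m

section Bool

variable {r N t : ℕ} {s : ℕ → Bool}

theorem zerosBelow_succ_of_eq_false {m : ℕ} (h : s m = false) :
    zerosBelow s (m + 1) = zerosBelow s m + 1 :=
  Nat.count_succ_eq_succ_count h

theorem zerosBelow_succ_of_eq_true {m : ℕ} (h : s m = true) :
    zerosBelow s (m + 1) = zerosBelow s m :=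
  Nat.count_succ_eq_count (by simp [h])

theorem zerosBelow_le (s : ℕ → Bool) (m : ℕ) : zerosBelow s m ≤ m := Nat.count_le _

theorem zerosBelow_le_add (s : ℕ → Bool) {p q : ℕ} (h : p ≤ q) :
    zerosBelow s q ≤ zerosBelow s p + (q - p) := by
  obtain ⟨d, rfl⟩ := Nat.exists_eq_add_of_le h
  rw [zerosBelow, Nat.count_add, Nat.add_sub_cancel_left]
  exact Nat.add_le_add_left (Nat.count_le _) _

theorem natRound_zero_eq_false_iff (hs : ∀ x, x % 2 ≠ r % 2 → s x ≤ s (x + 1)) :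
    natRound r s 0 = false ↔ s 0 = false ∨ s 1 = false := by
  have h0 := hs 0
  simp only [natRound]
  revert h0
  cases s 0 <;> cases s 1 <;> split_ifs <;> simp_all

theorem natRound_succ_eq_false_iff (hs : ∀ x, x % 2 ≠ r % 2 → s x ≤ s (x + 1)) (x : ℕ) :
    natRound r s (x + 1) = false ↔
      s x = false ∧ s (x + 1) = false ∨ s (x + 1) = true ∧ s (x + 2) = false := by
  have h0 := hs x
  have h1 := hs (x + 1)
  simp only [natRound, Nat.add_sub_cancel, Nat.succ_pos, if_true]
  revert h0 h1
  cases s x <;> cases s (x + 1) <;> cases s (x + 2) <;> split_ifs <;> simp_all <;> omega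

theorem zerosBelow_natRound (hs : ∀ x, x % 2 ≠ r % 2 → s x ≤ s (x + 1)) (m : ℕ) :
    zerosBelow (natRound r s) (m + 1) =
      zerosBelow s (m + 1) + if s m = true ∧ s (m + 1) = false then 1 else 0 := by
  induction m with
  | zero =>
    have := natRound_zero_eq_false_iff hs
    simp only [zerosBelow, Nat.count_succ, Nat.count_zero]
    revert this
    cases s 0 <;> cases s 1 <;> cases natRound r s 0 <;> simp
  | succ m ih =>
    have := natRound_succ_eq_false_iff hs m
    simp only [zerosBelow, Nat.count_succ] at ih ⊢
    rw [ih]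
    revert this
    cases s m <;> cases s (m + 1) <;> cases s (m + 2) <;> cases natRound r s (m + 1) <;> simp

theorem zerosBelow_natRound_of_eq_false (hs : ∀ x, x % 2 ≠ r % 2 → s x ≤ s (x + 1)) {m : ℕ}
    (h : natRound r s (m + 1) = false) :
    zerosBelow (natRound r s) (m + 1) = zerosBelow s (m + 1) := by
  rw [zerosBelow_natRound hs, if_neg, add_zero]
  rintro ⟨hm, hm₁⟩
  rcases (natRound_succ_eq_false_iff hs m).1 h with ⟨h', _⟩ | ⟨h', _⟩ <;> simp_all

def Pipelined (N t : ℕ) (s : ℕ → Bool) : Prop :=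
  ∀ p q, p ≤ q → s p = false → s q = false → zerosBelow s p < p → zerosBelow s q < q →
    p + t + zerosBelow s q ≤ N + 2 * zerosBelow s p

theorem pipelined_one (hs : ∀ x, N ≤ x → s x = true) : Pipelined N 1 s := by
  intro p q hpq _ hq _ _
  have hqN : q < N := by
    by_contra hNq
    simp [hs q (by omega)] at hq
  have := zerosBelow_le_add s hpq
  omega

theorem Pipelined.natRound (hs : ∀ x, x % 2 ≠ r % 2 → s x ≤ s (x + 1))
    (h : Pipelined N t s) :
    Pipelined N (t + 1) (natRound r s) := by
  intro p q hpq hp hq hpc hqc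
  obtain ⟨k, rfl⟩ := Nat.exists_eq_add_one_of_ne_zero (show p ≠ 0 by omega)
  obtain ⟨l, rfl⟩ := Nat.exists_eq_add_one_of_ne_zero (show q ≠ 0 by omega)
  rw [zerosBelow_natRound_of_eq_false hs hp] at hpc ⊢
  rw [zerosBelow_natRound_of_eq_false hs hq] at hqc ⊢
  rcases (natRound_succ_eq_false_iff hs k).1 hp with ⟨hk, hk₁⟩ | ⟨hk₁, hk₂⟩ <;>
    rcases (natRound_succ_eq_false_iff hs l).1 hq with ⟨hl, hl₁⟩ | ⟨hl₁, hl₂⟩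
  -- A new zero at `k + 1` either was blocked by the zero at `k` or came from `k + 2`; apply the
  -- old bound to the blocking zero, resp. to the old position.
  · have := zerosBelow_succ_of_eq_false hk
    have := h k (l + 1) (by omega) hk hl₁ (by omega) hqc
    omega
  · have := zerosBelow_succ_of_eq_false hk
    have : zerosBelow s (l + 2) = _ := zerosBelow_succ_of_eq_true hl₁
    have := h k (l + 2) (by omega) hk hl₂ (by omega) (by omega)
    omega
  · have hkl : k ≠ l := by rintro rfl; simp [hk₁] at hl₁
    have : zerosBelow s (k + 2) = _ := zerosBelow_succ_of_eq_true hk₁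
    have := h (k + 2) (l + 1) (by omega) hk₂ hl₁ (by omega) hqc
    omega
  · have : zerosBelow s (k + 2) = _ := zerosBelow_succ_of_eq_true hk₁
    have : zerosBelow s (l + 2) = _ := zerosBelow_succ_of_eq_true hl₁
    have := h (k + 2) (l + 2) (by omega) hk₂ hl₂ (by omega) (by omega)
    omega

theorem Pipelined.monotone (h : Pipelined N N s) : Monotone s := by
  have parked : ∀ p, s p = false → zerosBelow s p = p := fun p hp => by
    by_contra hne
    have hlt := lt_of_le_of_ne (zerosBelow_le s p) hne
    have := h p p le_rfl hp hp hlt hlt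
    omega
  intro i j hij
  cases hj : s j
  · obtain rfl | hij := hij.eq_or_lt
    · simp [hj]
    · simp [Nat.count_iff_forall.1 (parked j hj) i hij]
  · exact le_top

end Bool

theorem monotone_oetsSteps_bool (c : Fin n → Bool) : Monotone (oetsSteps c n) := by
  have pipelined : ∀ t, Pipelined n (t + 1) (padTrue (oetsSteps c (t + 1))) := by
    intro t
    induction t with
    | zero => exact pipelined_one fun _ => padTrue_of_le _
    | succ t ih =>
      rw [oetsSteps, padTrue_oetsRound]
      refine ih.natRound fun x hx => ?_
      rw [oetsSteps, padTrue_oetsRound]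
      exact natRound_le_natRound_succ _ _ (by omega)
  obtain _ | m := n
  · exact fun i => i.elim0
  · intro i j hij
    simpa only [padTrue_val] using (pipelined m).monotone (show (i : ℕ) ≤ j from hij)

end Oets

/-- Odd-Even Transposition Sort sorts any array of `n` elements in at most `n` rounds:
after `n` alternating odd/even rounds the array is nondecreasing. -/
theorem oets_sorts (a : Fin n → α) : Monotone (oetsSteps a n) :=
  monotone_of_forall_monotone_decide_le fun c => by
    have hc := (monotone_decide_le c).comp_oetsSteps a n
    rw [Function.comp_def] at hc
    exact hc ▸ Oets.monotone_oetsSteps_bool _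
end

section
/- Let G be a directed graph, v a vertex, D the set of descendants of v, P the set of predecessors of v, and S = D ∩ P the SCC of v. Every strongly connected component of G other than S is entirely contained in exactly one of the three sets D \ S, P \ S, or the complement of D ∪ P. -/
/-!
Descendants and predecessors of `v` are unions of strongly connected components, hence so is
every Boolean combination of them, in particular `D \ S`, `P \ S` and `(D ∪ P)ᶜ`. A component
lies in such a union exactly when its representative `w` does, and `w` lies in exactly one of
the three pieces as soon as `w ∉ S`, which holds because the component of `w` differs from `S`.
-/

namespace Relation

variable {α : Type*} {r : α → α → Prop} {a b : α} {s t : Set α}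

def scc (r : α → α → Prop) (a : α) : Set α :=
  {b | ReflTransGen r a b ∧ ReflTransGen r b a}

theorem self_mem_scc (r : α → α → Prop) (a : α) : a ∈ scc r a :=
  ⟨.refl, .refl⟩

theorem mem_scc_comm : b ∈ scc r a ↔ a ∈ scc r b :=
  And.comm

theorem scc_eq_of_mem (h : b ∈ scc r a) : scc r b = scc r a := by
  ext c
  exact ⟨fun ⟨hbc, hcb⟩ => ⟨h.1.trans hbc, hcb.trans h.2⟩,
    fun ⟨hac, hca⟩ => ⟨h.2.trans hac, hca.trans h.1⟩⟩

def IsSCCSaturated (r : α → α → Prop) (s : Set α) : Prop :=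
  ∀ ⦃a b⦄, a ∈ s → b ∈ scc r a → b ∈ s

namespace IsSCCSaturated

theorem compl (hs : IsSCCSaturated r s) : IsSCCSaturated r sᶜ :=
  fun _ _ ha hb hbs => ha (hs hbs (mem_scc_comm.1 hb))

theorem inter (hs : IsSCCSaturated r s) (ht : IsSCCSaturated r t) :
    IsSCCSaturated r (s ∩ t) :=
  fun _ _ ha hb => ⟨hs ha.1 hb, ht ha.2 hb⟩

theorem union (hs : IsSCCSaturated r s) (ht : IsSCCSaturated r t) :
    IsSCCSaturated r (s ∪ t) :=
  fun _ _ ha hb => ha.imp (hs · hb) (ht · hb)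

theorem diff (hs : IsSCCSaturated r s) (ht : IsSCCSaturated r t) :
    IsSCCSaturated r (s \ t) :=
  hs.inter ht.compl

theorem scc_subset_iff (hs : IsSCCSaturated r s) : scc r a ⊆ s ↔ a ∈ s :=
  ⟨fun h => h (self_mem_scc r a), fun ha _ hb => hs ha hb⟩

end IsSCCSaturated

theorem isSCCSaturated_descendants (r : α → α → Prop) (a : α) :
    IsSCCSaturated r {b | ReflTransGen r a b} :=
  fun _ _ hb hc => ReflTransGen.trans hb hc.1

theorem isSCCSaturated_predecessors (r : α → α → Prop) (a : α) :
    IsSCCSaturated r {b | ReflTransGen r b a} :=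
  fun _ _ hb hc => hc.2.trans hb

end Relation

open Relation in
/-- Let `D`, `P` be the descendant and predecessor sets of a vertex `v` and `S = D ∩ P`
its SCC. Every strongly connected component other than `S` is entirely contained in
exactly one of `D \ S`, `P \ S`, or `(D ∪ P)ᶜ`. -/
theorem scc_trichotomy {V : Type*} (E : V → V → Prop) (v : V) :
    ∀ w : V,
      ({u : V | Relation.ReflTransGen E w u ∧ Relation.ReflTransGen E u w} ≠
        {u : V | Relation.ReflTransGen E v u} ∩ {u : V | Relation.ReflTransGen E u v}) →
      (let D := {u : V | Relation.ReflTransGen E v u}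
       let P := {u : V | Relation.ReflTransGen E u v}
       let S := D ∩ P
       let scc := {u : V | Relation.ReflTransGen E w u ∧ Relation.ReflTransGen E u w}
       (scc ⊆ D \ S ∧ ¬scc ⊆ P \ S ∧ ¬scc ⊆ (D ∪ P)ᶜ) ∨
       (¬scc ⊆ D \ S ∧ scc ⊆ P \ S ∧ ¬scc ⊆ (D ∪ P)ᶜ) ∨
       (¬scc ⊆ D \ S ∧ ¬scc ⊆ P \ S ∧ scc ⊆ (D ∪ P)ᶜ)) := by
  intro w hne
  have hD := isSCCSaturated_descendants E v
  have hP := isSCCSaturated_predecessors E v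
  have hw : w ∉ scc E v := fun h => hne (scc_eq_of_mem h)
  change w ∉ {u | ReflTransGen E v u} ∩ {u | ReflTransGen E u v} at hw
  simp only [← scc.eq_def E w, (hD.diff (hD.inter hP)).scc_subset_iff,
    (hP.diff (hD.inter hP)).scc_subset_iff, (hD.union hP).compl.scc_subset_iff]
  grind
end

section
/- Consider parallel source-propagation BFS: each node holds a value in Option (Fin n), the source s starts with some s and all others with none; at each step a node with value none takes the value s if any in-neighbour's value is some s (otherwise stays none), and a node with value some s keeps it. This update is idempotent on stabilized states: repeating the computation at a node whose in-neighbourhood values are unchanged does not change its state. Moreover after n steps, node i holds some s iff i is reachable from s. -/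
variable {n : ℕ} (E : Fin n → Fin n → Prop) (s : Fin n)

open Classical in
/-- One step of parallel source-propagation BFS: a node holding `some v` keeps it; a node
holding `none` takes `some s` if some in-neighbour holds `some s`, else stays `none`. -/
noncomputable def bfsStep (h : Fin n → Option (Fin n)) : Fin n → Option (Fin n) :=
  fun i =>
    match h i with
    | some v => some v
    | none => if ∃ j, E j i ∧ h j = some s then some s else none

/-- Initial state: the source holds `some s`, all other nodes hold `none`. -/
noncomputable def bfsInit : Fin n → Option (Fin n) := fun i =>
  if i = s then some s else none

/-!
A step at a node depends only on its own value and those of its in-neighbours, and a node that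
is still `none` after a step was `none` before it; this gives the idempotence.

Starting from `bfsInit s`, every state holds only `none` or `some s`, so it encodes a finite set
of nodes, and one step of `bfsStep` becomes the set map
`S ↦ S ∪ {out-neighbours of S}`. That map is inflationary on the subsets of `Fin n`, so each
step either enlarges the set or has reached a fixed point; hence after `n` steps it is a fixed
point, i.e. a set closed under `E` that contains `s`. Such a set contains everything reachable
from `s`, and conversely every node entered by the iteration is reachable.
-/

open Function Finset

theorem Finset.isFixedPt_iterate_or_le_card_iterate {α : Type*} {F : Finset α → Finset α}
    (hF : ∀ S, S ⊆ F S) (S : Finset α) (k : ℕ) :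
    IsFixedPt F (F^[k] S) ∨ k ≤ #(F^[k] S) := by
  induction k with
  | zero => exact Or.inr (Nat.zero_le _)
  | succ k ih =>
    rw [iterate_succ_apply']
    by_cases hfix : IsFixedPt F (F^[k] S)
    · exact Or.inl hfix.apply
    · have hlt : F^[k] S ⊂ F (F^[k] S) := (hF _).ssubset_of_ne (Ne.symm hfix)
      exact Or.inr ((ih.resolve_left hfix).trans_lt (card_lt_card hlt))

theorem Finset.isFixedPt_iterate_card {α : Type*} [Fintype α] {F : Finset α → Finset α}
    (hF : ∀ S, S ⊆ F S) (S : Finset α) : IsFixedPt F (F^[Fintype.card α] S) := by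
  rcases isFixedPt_iterate_or_le_card_iterate hF S (Fintype.card α) with hfix | hcard
  · exact hfix
  · rw [eq_univ_of_card _ (hcard.antisymm' (card_le_univ _))]
    exact (hF univ).antisymm' (subset_univ _)

theorem bfsStep_of_eq_some {h : Fin n → Option (Fin n)} {i v : Fin n} (hv : h i = some v) :
    bfsStep E s h i = some v := by
  simp [bfsStep, hv]

theorem bfsStep_congr {g h : Fin n → Option (Fin n)} {i : Fin n} (hi : g i = h i)
    (hin : ∀ j, E j i → g j = h j) : bfsStep E s g i = bfsStep E s h i := by
  have hex : (∃ j, E j i ∧ g j = some s) ↔ ∃ j, E j i ∧ h j = some s :=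
    exists_congr fun j => and_congr_right fun hji => by rw [hin j hji]
  classical
  simp only [bfsStep, hi, hex]

theorem eq_none_of_bfsStep_eq_none {h : Fin n → Option (Fin n)} {i : Fin n}
    (hi : bfsStep E s h i = none) : h i = none := by
  cases hh : h i with
  | none => rfl
  | some v => simp [bfsStep_of_eq_some E s hh] at hi

theorem bfsStep_bfsStep_of_stable (h : Fin n → Option (Fin n)) (i : Fin n)
    (hin : ∀ j, E j i → bfsStep E s h j = h j) :
    bfsStep E s (bfsStep E s h) i = bfsStep E s h i := by
  cases hi : bfsStep E s h i with
  | some v => exact bfsStep_of_eq_some E s hi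
  | none =>
    rw [← hi]
    exact bfsStep_congr E s (hi.trans (eq_none_of_bfsStep_eq_none E s hi).symm) hin

def bfsStateOf (S : Finset (Fin n)) : Fin n → Option (Fin n) :=
  fun i => if i ∈ S then some s else none

open Classical in
noncomputable def bfsExpand (S : Finset (Fin n)) : Finset (Fin n) :=
  S ∪ univ.filter fun i => ∃ j ∈ S, E j i

theorem subset_bfsExpand (S : Finset (Fin n)) : S ⊆ bfsExpand E S :=
  subset_union_left

theorem mem_bfsExpand {S : Finset (Fin n)} {i : Fin n} :
    i ∈ bfsExpand E S ↔ i ∈ S ∨ ∃ j ∈ S, E j i := by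
  simp [bfsExpand]

theorem bfsStateOf_eq_some {S : Finset (Fin n)} {i : Fin n} :
    bfsStateOf s S i = some s ↔ i ∈ S := by
  simp [bfsStateOf]

theorem semiconj_bfsStateOf : Semiconj (bfsStateOf s) (bfsExpand E) (bfsStep E s) := by
  classical
  intro S
  funext i
  by_cases hi : i ∈ S <;> simp [bfsStep, bfsStateOf, mem_bfsExpand, hi, and_comm]

theorem iterate_bfsStep_bfsInit (k : ℕ) :
    (bfsStep E s)^[k] (bfsInit s) = bfsStateOf s ((bfsExpand E)^[k] {s}) := by
  have hinit : bfsInit s = bfsStateOf s {s} := by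
    funext i
    simp [bfsInit, bfsStateOf]
  rw [hinit]
  exact ((semiconj_bfsStateOf E s).iterate_right k {s}).symm

theorem reflTransGen_of_mem_iterate_bfsExpand (k : ℕ) {i : Fin n}
    (hi : i ∈ (bfsExpand E)^[k] {s}) : Relation.ReflTransGen E s i := by
  induction k generalizing i with
  | zero =>
    rw [iterate_zero_apply, mem_singleton] at hi
    exact hi ▸ .refl
  | succ k ih =>
    rw [iterate_succ_apply', mem_bfsExpand] at hi
    rcases hi with hi | ⟨j, hj, hji⟩
    · exact ih hi
    · exact (ih hj).tail hji

theorem mem_of_reflTransGen_of_isFixedPt {T : Finset (Fin n)} (hT : IsFixedPt (bfsExpand E) T)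
    (hs : s ∈ T) {i : Fin n} (hi : Relation.ReflTransGen E s i) : i ∈ T := by
  induction hi with
  | refl => exact hs
  | tail _ hji hj =>
    rw [← hT, mem_bfsExpand]
    exact Or.inr ⟨_, hj, hji⟩

/-- The update is idempotent on stabilized states: if the values of all in-neighbours of
`i` are unchanged by a step, then updating `i` again does not change its state. Moreover
after `n` steps node `i` holds `some s` iff `i` is reachable from `s`. -/
theorem bfs_propagation_correct :
    (∀ (h : Fin n → Option (Fin n)) (i : Fin n),
      (∀ j, E j i → bfsStep E s h j = h j) →
      bfsStep E s (bfsStep E s h) i = bfsStep E s h i) ∧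
    (∀ i : Fin n,
      (bfsStep E s)^[n] (bfsInit s) i = some s ↔ Relation.ReflTransGen E s i) := by
  refine ⟨bfsStep_bfsStep_of_stable E s, fun i => ?_⟩
  have hfix : IsFixedPt (bfsExpand E) ((bfsExpand E)^[n] {s}) := by
    simpa using isFixedPt_iterate_card (subset_bfsExpand E) {s}
  have hs : s ∈ (bfsExpand E)^[n] {s} :=
    id_le_iterate_of_id_le (subset_bfsExpand E) n {s} (mem_singleton_self s)
  rw [iterate_bfsStep_bfsInit, bfsStateOf_eq_some]
  exact ⟨reflTransGen_of_mem_iterate_bfsExpand E s n,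
    mem_of_reflTransGen_of_isFixedPt E s hfix hs⟩
end
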